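/- arXiv:2308.15596 — 2 statements merged into one kernel-verified Lean document; each statement's English description precedes it below -/
import Mathlib

section
/- For a discrete outcome Y supported on ℕ with conditional CDF F(·|X), the unconditional distribution of the probability integral transform is G_0(s) := Pr(F(Y|X) ≤ s) = E_X[F(F^{(-1)}(s|X) | X)] for all s ∈ (0,1). -/
open MeasureTheory ProbabilityTheory Filter Topology

/-! Given `X = x`, the set of `k` with `F(k|x) ≤ s` is a down-set of `ℕ`, bounded since
`F(k|x) → 1 > s`; so it is either empty or `{k ≤ F⁽⁻¹⁾(s|x)}`, of conditional mass
`F(F⁽⁻¹⁾(s|x)|x)`. Integrating this over `X` computes `Pr(F(Y|X) ≤ s)` by disintegration. -/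

lemma Monotone.setOf_le_eq_Iic_sSup {f : ℕ → ℝ} (hf : Monotone f) {s : ℝ}
    (hne : ∃ k, f k ≤ s) (hlt : ∃ k, s < f k) :
    {n | f n ≤ s} = Set.Iic (sSup {n | f n ≤ s}) := by
  obtain ⟨k₀, hk₀⟩ := hlt
  have hbdd : BddAbove {n | f n ≤ s} :=
    ⟨k₀, fun k hk => le_of_lt (hf.reflect_lt (hk.trans_lt hk₀))⟩
  ext n
  exact ⟨fun hn => le_csSup hbdd hn, fun hn => (hf hn).trans (Nat.sSup_mem hne hbdd)⟩

lemma exists_lt_measure_Iic_toReal (ν : Measure ℕ) [IsProbabilityMeasure ν] {s : ℝ}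
    (hs : s < 1) : ∃ k, s < (ν (Set.Iic k)).toReal := by
  have hcdf : Tendsto (fun k => (ν (Set.Iic k)).toReal) atTop (𝓝 1) := by
    have h := tendsto_measure_Iic_atTop ν
    rw [measure_univ] at h
    exact ENNReal.toReal_one ▸ (ENNReal.tendsto_toReal ENNReal.one_ne_top).comp h
  exact (hcdf.eventually (lt_mem_nhds hs)).exists

open Classical in
lemma measure_setOf_cdf_le_toReal (ν : Measure ℕ) [IsProbabilityMeasure ν] {s : ℝ}
    (hs : s < 1) :
    (ν {n | (ν (Set.Iic n)).toReal ≤ s}).toReal =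
      if ∃ k, (ν (Set.Iic k)).toReal ≤ s then
        (ν (Set.Iic (sSup {k | (ν (Set.Iic k)).toReal ≤ s}))).toReal
      else 0 := by
  have hmono : Monotone fun n => (ν (Set.Iic n)).toReal := fun a b hab =>
    ENNReal.toReal_mono (measure_ne_top _ _) (measure_mono (Set.Iic_subset_Iic.mpr hab))
  split_ifs with hne
  · conv_lhs => rw [hmono.setOf_le_eq_Iic_sSup hne (exists_lt_measure_Iic_toReal ν hs)]
  · have hempty : {n | (ν (Set.Iic n)).toReal ≤ s} = ∅ :=
      Set.eq_empty_of_forall_notMem fun n hn => hne ⟨n, hn⟩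
    simp [hempty]

open Classical in
theorem stmt_2 {α : Type*} [MeasurableSpace α]
    (μ : Measure α) [IsProbabilityMeasure μ]
    (κ : Kernel α ℕ) [IsMarkovKernel κ]
    (F : α → ℕ → ℝ)
    (hF : ∀ x n, F x n = (κ x {m | m ≤ n}).toReal)
    (s : ℝ) (hs : s ∈ Set.Ioo (0 : ℝ) 1) :
    ((μ.compProd κ) {p : α × ℕ | F p.1 p.2 ≤ s}).toReal =
      ∫ x, (if ∃ k, F x k ≤ s then F x (sSup {k | F x k ≤ s}) else 0) ∂μ := by
  obtain rfl : F = fun x n => (κ x (Set.Iic n)).toReal := funext₂ hF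
  have hmeas : MeasurableSet {p : α × ℕ | (κ p.1 (Set.Iic p.2)).toReal ≤ s} :=
    measurableSet_le (measurable_from_prod_countable_left fun n =>
      (κ.measurable_coe measurableSet_Iic).ennreal_toReal) measurable_const
  rw [Measure.compProd_apply hmeas, ← integral_toReal
    (Kernel.measurable_kernel_prodMk_left hmeas).aemeasurable
    (ae_of_all _ fun x => measure_lt_top _ _)]
  exact integral_congr_ae (ae_of_all _ fun x => measure_setOf_cdf_le_toReal (κ x) hs.2)
end

section
/- For an ordinal outcome Y on {0,…,k_max}, the distribution of the DPIT satisfies: Pr(G_0(F(Y|X)) ≤ s) = s for s ≤ c, Pr(G_0(F(Y|X)) ≤ s) = c for c < s < 1, and Pr(G_0(F(Y|X)) ≤ 1) = 1, where c = E_X[F(k_max − 1 | X)]. -/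
/-! On `{W < 1}` the CDF `G₀` is continuous, so the usual probability integral transform argument
applies there: for `s < c` the sublevel set `{G₀ ≤ s}` is a half-line `(-∞, u]` with `G₀ u = s`,
whence `Pr(G₀(W) ≤ s) = G₀ u = s`. For `c ≤ s < 1` the event `G₀(W) ≤ s` is exactly `W < 1`,
since `G₀ ≤ Pr(W < 1) = c` below `1` while `G₀ 1 = 1`. -/

open MeasureTheory Set

theorem exists_lt_measure_setOf_le_of_lt_measure_setOf_lt {Ω α : Type*} [MeasurableSpace Ω]
    [LinearOrder α] [TopologicalSpace α] [OrderTopology α] [SecondCountableTopology α]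
    {μ : Measure Ω} {W : Ω → α} {b : α} {r : ENNReal} (h : r < μ {ω | W ω < b}) :
    ∃ t < b, r < μ {ω | W ω ≤ t} := by
  have hunion : {ω | W ω < b} = ⋃ t : Iio b, {ω | W ω ≤ t} := by
    ext ω
    simp only [mem_iUnion, Subtype.exists, mem_Iio, exists_prop]
    exact ⟨fun hω => ⟨W ω, hω, le_rfl⟩, fun ⟨t, htb, hωt⟩ => hωt.trans_lt htb⟩
  rw [hunion, Monotone.measure_iUnion (s := fun t : Iio b => {ω | W ω ≤ t})
    fun s t hst ω hω => le_trans hω hst] at h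
  obtain ⟨t, ht⟩ := lt_iSup_iff.1 h
  exact ⟨t, t.2, ht⟩

theorem Monotone.exists_apply_eq_and_preimage_Iic_eq_Iic {α δ : Type*}
    [ConditionallyCompleteLinearOrder α] [TopologicalSpace α] [OrderTopology α] [DenselyOrdered α]
    [LinearOrder δ] [TopologicalSpace δ] [OrderClosedTopology δ]
    {f : α → δ} (hf : Monotone f) {a b : α} (hcont : ContinuousOn f (Icc a b)) {s : δ}
    (has : f a ≤ s) (hsb : s < f b) : ∃ u, f u = s ∧ f ⁻¹' Iic s = Iic u := by
  have hlt_b : ∀ x, f x ≤ s → x < b := fun x hx =>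
    lt_of_not_ge fun hbx => (hsb.trans_le (hf hbx)).not_ge hx
  set K := Icc a b ∩ f ⁻¹' Iic s
  have hKbdd : BddAbove K := ⟨b, fun x hx => hx.1.2⟩
  have hle_sSup : ∀ x, f x ≤ s → x ≤ sSup K := fun x hx =>
    (le_total x a).elim (fun hxa => hxa.trans (le_csSup hKbdd ⟨⟨le_rfl, (hlt_b a has).le⟩, has⟩))
      fun hax => le_csSup hKbdd ⟨⟨hax, (hlt_b x hx).le⟩, hx⟩
  obtain ⟨⟨hau, hub⟩, hus⟩ : sSup K ∈ K :=
    (hcont.preimage_isClosed_of_isClosed isClosed_Icc isClosed_Iic).csSup_mem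
      ⟨a, ⟨le_rfl, (hlt_b a has).le⟩, has⟩ hKbdd
  obtain ⟨v, ⟨huv, hvb⟩, hvs⟩ :=
    intermediate_value_Icc hub (hcont.mono (Icc_subset_Icc_left hau)) ⟨hus, hsb.le⟩
  refine ⟨sSup K, le_antisymm (hle_sSup v hvs.le) huv ▸ hvs, ?_⟩
  ext x
  exact ⟨hle_sSup x, fun hx => (hf hx).trans hus⟩

theorem measure_setOf_apply_le_eq_ofReal {Ω α : Type*} [MeasurableSpace Ω]
    [ConditionallyCompleteLinearOrder α] [TopologicalSpace α] [OrderTopology α] [DenselyOrdered α]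
    {μ : Measure Ω} [IsFiniteMeasure μ] {W : Ω → α} {G : α → ℝ}
    (hG : ∀ t, G t = (μ {ω | W ω ≤ t}).toReal) {a b : α} {s : ℝ}
    (hcont : ContinuousOn G (Icc a b)) (has : G a ≤ s) (hsb : s < G b) :
    μ {ω | G (W ω) ≤ s} = ENNReal.ofReal s := by
  have hmono : Monotone G := fun x y hxy => by
    simp only [hG]
    exact ENNReal.toReal_mono (measure_ne_top μ _) (measure_mono fun ω h => le_trans h hxy)
  obtain ⟨u, hus, hpre⟩ := hmono.exists_apply_eq_and_preimage_Iic_eq_Iic hcont has hsb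
  change μ (W ⁻¹' (G ⁻¹' Iic s)) = _
  rw [hpre, ← hus, hG, ENNReal.ofReal_toReal (measure_ne_top μ _)]
  rfl

theorem setOf_apply_le_eq_setOf_lt {Ω α β : Type*} [LinearOrder α] [LinearOrder β]
    {W : Ω → α} {f : α → β} {b : α} {s : β} (hWb : ∀ ω, W ω ≤ b) (hfs : ∀ t < b, f t ≤ s)
    (hsb : s < f b) : {ω | f (W ω) ≤ s} = {ω | W ω < b} := by
  ext ω
  show f (W ω) ≤ s ↔ W ω < b
  refine ⟨fun h => (hWb ω).lt_of_ne fun hb => ?_, fun h => hfs _ h⟩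
  rw [hb] at h
  exact h.not_gt hsb

theorem stmt_10_general {Ω : Type*} [MeasurableSpace Ω]
    (P : Measure Ω) [IsProbabilityMeasure P]
    (W : Ω → ℝ)
    (G₀ : ℝ → ℝ)
    (hG₀ : ∀ t, G₀ t = (P {ω | W ω ≤ t}).toReal)
    (hrange : ∀ ω, W ω ∈ Set.Ioc (0 : ℝ) 1)
    (hcont : ContinuousOn G₀ (Set.Iio 1))
    (c : ℝ) (hc : c ∈ Set.Ioo (0 : ℝ) 1)
    (hmass : (P {ω | W ω < 1}).toReal = c) :
    (∀ s : ℝ, 0 < s → s ≤ c → P {ω | G₀ (W ω) ≤ s} = ENNReal.ofReal s) ∧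
      (∀ s : ℝ, c < s → s < 1 → P {ω | G₀ (W ω) ≤ s} = ENNReal.ofReal c) ∧
      P {ω | G₀ (W ω) ≤ 1} = 1 := by
  have hmass' : P {ω | W ω < 1} = ENNReal.ofReal c := by
    rw [← hmass, ENNReal.ofReal_toReal (measure_ne_top P _)]
  have hG₀_le : ∀ t < 1, G₀ t ≤ c := fun t ht => by
    rw [hG₀, ← hmass]
    exact ENNReal.toReal_mono (measure_ne_top P _)
      (measure_mono fun ω (h : W ω ≤ t) => (h.trans_lt ht : W ω < 1))
  have hG₀_one : G₀ 1 = 1 := by simp [hG₀, fun ω => (hrange ω).2]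
  have hflat : ∀ s, c ≤ s → s < 1 → {ω | G₀ (W ω) ≤ s} = {ω | W ω < 1} := fun s hcs hs1 =>
    setOf_apply_le_eq_setOf_lt (fun ω => (hrange ω).2) (fun t ht => (hG₀_le t ht).trans hcs)
      (hG₀_one.symm ▸ hs1)
  refine ⟨fun s hs hsc => ?_, fun s hcs hs1 => by rw [hflat s hcs.le hs1, hmass'], ?_⟩
  · rcases hsc.lt_or_eq with hsc | rfl
    · obtain ⟨t, ht1, hst⟩ := exists_lt_measure_setOf_le_of_lt_measure_setOf_lt
        (hmass' ▸ (ENNReal.ofReal_lt_ofReal_iff hc.1).2 hsc)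
      rw [← ENNReal.ofReal_toReal (measure_ne_top P _), ← hG₀,
        ENNReal.ofReal_lt_ofReal_iff_of_nonneg hs.le] at hst
      have hG₀_zero : G₀ 0 = 0 := by simp [hG₀, fun ω => not_le.2 (hrange ω).1]
      exact measure_setOf_apply_le_eq_ofReal hG₀ (hcont.mono fun x hx => hx.2.trans_lt ht1)
        (hG₀_zero ▸ hs.le) hst
    · rw [hflat s le_rfl hc.2, hmass']
  · have hG₀_le_one : ∀ ω, G₀ (W ω) ≤ 1 := fun ω => by
      rw [hG₀]
      exact ENNReal.toReal_le_of_le_ofReal zero_le_one (by simpa using prob_le_one)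
    simp [hG₀_le_one]

theorem stmt_10 {Ω : Type*} [MeasurableSpace Ω]
    (P : Measure Ω) [IsProbabilityMeasure P]
    (W : Ω → ℝ) (hW : Measurable W)
    (G₀ : ℝ → ℝ)
    (hG₀ : ∀ t, G₀ t = (P {ω | W ω ≤ t}).toReal)
    (hrange : ∀ ω, W ω ∈ Set.Ioc (0 : ℝ) 1)
    (hcont : ContinuousOn G₀ (Set.Iio 1))
    (c : ℝ) (hc : c ∈ Set.Ioo (0 : ℝ) 1)
    (hmass : (P {ω | W ω < 1}).toReal = c) :
    (∀ s : ℝ, 0 < s → s ≤ c → P {ω | G₀ (W ω) ≤ s} = ENNReal.ofReal s) ∧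
      (∀ s : ℝ, c < s → s < 1 → P {ω | G₀ (W ω) ≤ s} = ENNReal.ofReal c) ∧
      P {ω | G₀ (W ω) ≤ 1} = 1 :=
  stmt_10_general P W G₀ hG₀ hrange hcont c hc hmass
end
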